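/- arXiv:2403.19145 — 7 statements merged into one kernel-verified Lean document; each statement's English description precedes it below -/
import Mathlib

section
/- Let Σ be a base of Δ. Then there exists a linear functional φ : V → ℝ such that φ(α) ≠ 0 for every α ∈ Δ and, for every α ∈ Δ, φ(α) > 0 if and only if α ∈ ℕΣ. In particular, Δ ∩ ℕΣ is a positive system of Δ. -/
open Pointwise

/-- `NComb S` is the set of all finite linear combinations of elements of `S`
with non-negative integer coefficients, i.e. the additive submonoid generated by `S`. -/
def NComb {V : Type*} [AddCommMonoid V] (S : Set V) : Set V :=
  (AddSubmonoid.closure S : Set V)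

/-- `B` is a base of `Δ`: `B ⊆ Δ`, `B` is linearly independent over `ℝ`, and
`Δ ⊆ ℕB ∪ (−ℕB)`. -/
def IsBase {V : Type*} [AddCommGroup V] [Module ℝ V] (Δ B : Set V) : Prop :=
  B ⊆ Δ ∧ LinearIndependent ℝ (fun x : B => (x : V)) ∧
    Δ ⊆ NComb B ∪ (-NComb B)

/-! The functional `φ` is the sum of the coordinate functions of `Σ`, for a basis of `V`
extending `Σ`; it takes the value `1` on `Σ`, so it is positive on `ℕΣ \ {0}` and negative
on `−ℕΣ \ {0}`, and `Δ \ {0}` lies in the union of these two sets. -/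

theorem LinearIndepOn.exists_linearMap_eq_one {K V : Type*} [Field K] [AddCommGroup V]
    [Module K V] {B : Set V} (hB : LinearIndepOn K id B) :
    ∃ φ : V →ₗ[K] K, ∀ b ∈ B, φ b = 1 := by
  classical
  let e := Module.Basis.extend hB
  refine ⟨e.constr K fun i => if (i : V) ∈ B then 1 else 0, fun b hb => ?_⟩
  have he : e ⟨b, hB.subset_extend _ hb⟩ = b := Module.Basis.extend_apply_self hB _
  rw [← he, Module.Basis.constr_basis, if_pos hb]

theorem eq_zero_or_pos_of_mem_nComb {V : Type*} [AddCommMonoid V] {S : Set V} (φ : V →+ ℝ)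
    (hφ : ∀ s ∈ S, 0 < φ s) {x : V} (hx : x ∈ NComb S) : x = 0 ∨ 0 < φ x := by
  induction hx using AddSubmonoid.closure_induction with
  | mem s hs => exact .inr (hφ s hs)
  | zero => exact .inl rfl
  | add y z _ _ hy hz =>
    rcases hy with rfl | hy
    · simpa using hz
    rcases hz with rfl | hz
    · simpa using Or.inr hy
    exact .inr (by rw [map_add]; positivity)

theorem nonneg_of_mem_nComb {V : Type*} [AddCommMonoid V] {S : Set V} (φ : V →+ ℝ)
    (hφ : ∀ s ∈ S, 0 < φ s) {x : V} (hx : x ∈ NComb S) : 0 ≤ φ x := by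
  rcases eq_zero_or_pos_of_mem_nComb φ hφ hx with rfl | h
  · simp
  · exact h.le

theorem ne_zero_and_pos_iff_of_mem_nComb_union_neg {V : Type*} [AddCommGroup V] {S : Set V}
    (φ : V →+ ℝ) (hφ : ∀ s ∈ S, 0 < φ s) {x : V} (hx0 : x ≠ 0)
    (hx : x ∈ NComb S ∪ -NComb S) : φ x ≠ 0 ∧ (0 < φ x ↔ x ∈ NComb S) := by
  rcases hx with hx | hx
  · have hpos := (eq_zero_or_pos_of_mem_nComb φ hφ hx).resolve_left hx0
    exact ⟨hpos.ne', iff_of_true hpos hx⟩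
  · have hneg : φ x < 0 := by
      have := (eq_zero_or_pos_of_mem_nComb φ hφ hx).resolve_left (neg_ne_zero.mpr hx0)
      rwa [map_neg, neg_pos] at this
    refine ⟨hneg.ne, iff_of_false hneg.not_gt fun h => ?_⟩
    exact hneg.not_ge (nonneg_of_mem_nComb φ hφ h)

theorem statement0_general {V : Type*} [AddCommGroup V] [Module ℝ V]
    (Δ B : Set V) (h0 : (0 : V) ∉ Δ) (hB : IsBase Δ B) :
    ∃ φ : V →ₗ[ℝ] ℝ, ∀ α ∈ Δ, φ α ≠ 0 ∧ (0 < φ α ↔ α ∈ NComb B) := by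
  obtain ⟨-, hli, hcover⟩ := hB
  obtain ⟨φ, hφ⟩ := LinearIndepOn.exists_linearMap_eq_one hli
  refine ⟨φ, fun α hα => ?_⟩
  exact ne_zero_and_pos_iff_of_mem_nComb_union_neg φ.toAddMonoidHom
    (fun b hb => by simp [hφ b hb]) (ne_of_mem_of_not_mem hα h0) (hcover hα)

/-- For a base `B` of `Δ` there is a linear functional `φ` which is non-zero on all of `Δ`
and positive exactly on `Δ ∩ ℕB`; in particular `Δ ∩ ℕB` is a positive system. -/
theorem statement0 {V : Type*} [AddCommGroup V] [Module ℝ V]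
    (Δ B : Set V) (hfin : Δ.Finite) (h0 : (0 : V) ∉ Δ) (hB : IsBase Δ B) :
    ∃ φ : V →ₗ[ℝ] ℝ, ∀ α ∈ Δ, φ α ≠ 0 ∧ (0 < φ α ↔ α ∈ NComb B) :=
  statement0_general Δ B h0 hB
end

section
/- Let Σ and Σ' be bases of Δ such that Δ ∩ ℕΣ = Δ ∩ ℕΣ'. Then Σ = Σ'. (That is, the correspondence sending a base Σ to the positive system Δ_Σ⁺ = Δ ∩ ℕΣ is injective.) -/
/-!
An element `b` of a linearly independent set `B` is indecomposable in the monoid `ℕB`: comparing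
`ℕ`-coordinates, `b = x + y` with `x, y ∈ ℕB` forces `x = 0` or `y = 0`. If `B, B'` are bases with
the same positive system, each of them lies in the monoid generated by the other, so writing
`b ∈ B` as a sum of elements of `B' ⊆ ℕB` shows that `b` is one of the summands.
-/

open Pointwise

open AddSubmonoid

theorem mem_of_mem_closure_of_indecomposable {M : Type*} [AddMonoid M] {S T : Set M} {b : M}
    (hb0 : b ≠ 0)
    (hb : ∀ x ∈ closure S, ∀ y ∈ closure S, x + y = b → x = 0 ∨ y = 0)
    (hTS : T ⊆ closure S) (hbT : b ∈ closure T) : b ∈ T := by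
  obtain ⟨l, hlT, hl⟩ := exists_list_of_mem_closure hbT
  induction l with
  | nil => exact absurd hl.symm hb0
  | cons v l ih =>
    have hlS : l.sum ∈ closure S :=
      list_sum_mem fun y hy => hTS (hlT y (List.mem_cons_of_mem v hy))
    rw [List.sum_cons] at hl
    rcases hb v (hTS (hlT v List.mem_cons_self)) l.sum hlS hl with hv | hl0
    · exact ih (fun y hy => hlT y (List.mem_cons_of_mem v hy)) (by rwa [hv, zero_add] at hl)
    · rw [hl0, add_zero] at hl
      exact hl ▸ hlT v List.mem_cons_self

theorem exists_linearCombination_nat_eq_of_mem_closure {V : Type*} [AddCommMonoid V]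
    {B : Set V} {x : V} (hx : x ∈ closure B) :
    ∃ c : B →₀ ℕ, Finsupp.linearCombination ℕ (fun b : B => (b : V)) c = x := by
  have hrange := Finsupp.range_linearCombination ℕ (v := fun b : B => (b : V))
  rw [Subtype.range_coe] at hrange
  rwa [← Submodule.span_nat_eq_addSubmonoidClosure, Submodule.mem_toAddSubmonoid, ← hrange] at hx

theorem LinearIndependent.eq_zero_or_eq_zero_of_add_eq_mem {K V : Type*} [CommSemiring K]
    [CharZero K] [AddCommMonoid V] [Module K V] {B : Set V}
    (hB : LinearIndependent K (fun b : B => (b : V))) {b x y : V} (hb : b ∈ B)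
    (hx : x ∈ closure B) (hy : y ∈ closure B) (hxy : x + y = b) : x = 0 ∨ y = 0 := by
  obtain ⟨c, rfl⟩ := exists_linearCombination_nat_eq_of_mem_closure hx
  obtain ⟨d, rfl⟩ := exists_linearCombination_nat_eq_of_mem_closure hy
  have hcd : c + d = Finsupp.single ⟨b, hb⟩ 1 :=
    hB.restrict_scalars' ℕ (by simpa using hxy)
  have hdeg := congrArg Finsupp.degree hcd
  rw [map_add, Finsupp.degree_single] at hdeg
  rcases Nat.add_eq_one_iff.1 hdeg with ⟨hc, -⟩ | ⟨-, hd⟩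
  · exact .inl (by rw [(Finsupp.degree_eq_zero_iff c).1 hc, map_zero])
  · exact .inr (by rw [(Finsupp.degree_eq_zero_iff d).1 hd, map_zero])

theorem LinearIndependent.subset_of_subset_closure {K V : Type*} [CommSemiring K] [CharZero K]
    [AddCommMonoid V] [Module K V] {B B' : Set V}
    (hB : LinearIndependent K (fun b : B => (b : V)))
    (hBB' : B ⊆ closure B') (hB'B : B' ⊆ closure B) : B ⊆ B' := fun b hb =>
  mem_of_mem_closure_of_indecomposable (hB.ne_zero ⟨b, hb⟩)
    (fun _ hx _ hy => hB.eq_zero_or_eq_zero_of_add_eq_mem hb hx hy) hB'B (hBB' hb)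

theorem subset_NComb_of_inter_NComb_eq {V : Type*} [AddCommMonoid V] {Δ B B' : Set V}
    (hBΔ : B ⊆ Δ) (h : Δ ∩ NComb B = Δ ∩ NComb B') : B ⊆ NComb B' := fun b hb =>
  (h ▸ ⟨hBΔ hb, subset_closure hb⟩ : b ∈ Δ ∩ NComb B').2

theorem statement2_general {V : Type*} [AddCommGroup V] [Module ℝ V]
    (Δ B B' : Set V)
    (hB : IsBase Δ B) (hB' : IsBase Δ B')
    (h : Δ ∩ NComb B = Δ ∩ NComb B') : B = B' := by
  obtain ⟨hBΔ, hBli, -⟩ := hB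
  obtain ⟨hB'Δ, hB'li, -⟩ := hB'
  have hBB' := subset_NComb_of_inter_NComb_eq hBΔ h
  have hB'B := subset_NComb_of_inter_NComb_eq hB'Δ h.symm
  exact (hBli.subset_of_subset_closure hBB' hB'B).antisymm
    (hB'li.subset_of_subset_closure hB'B hBB')

/-- Two bases of `Δ` determining the same positive system coincide. -/
theorem statement2 {V : Type*} [AddCommGroup V] [Module ℝ V]
    (Δ B B' : Set V) (hfin : Δ.Finite) (h0 : (0 : V) ∉ Δ)
    (hB : IsBase Δ B) (hB' : IsBase Δ B')
    (h : Δ ∩ NComb B = Δ ∩ NComb B') : B = B' :=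
  statement2_general Δ B B' hB hB' h
end

section
/- Let Σ and Σ' be bases of Δ with Σ ≠ Σ'. Then there exists α ∈ Σ with α ∈ −ℕΣ'; that is, some simple root of Σ is a negative root for Σ'. -/
open Pointwise

/-!
If every simple root of `Σ` were positive for `Σ'`, then `ℕΣ ⊆ ℕΣ'`; and since a simple root
of `Σ'` is never negative for `Σ'`, also `ℕΣ' ⊆ ℕΣ`. A base is recovered from its monoid `ℕΣ`
as the set of its indecomposable elements (nonzero, and no sum of two nonzero elements), so
`Σ = Σ'`. Both the indecomposability of simple roots and their positivity come from a linear
functional equal to `1` on `Σ`: it is `≥ 1` on every nonzero element of `ℕΣ`.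
-/

section AddMonoid

variable {M : Type*} [AddMonoid M]

def indecomposables (S : Set M) : Set M :=
  {x ∈ S | x ≠ 0 ∧ ∀ y ∈ S, ∀ z ∈ S, x = y + z → y = 0 ∨ z = 0}

lemma eq_zero_or_exists_add_of_mem_closure {S : Set M} {x : M}
    (hx : x ∈ AddSubmonoid.closure S) :
    x = 0 ∨ ∃ s ∈ S, ∃ y ∈ AddSubmonoid.closure S, x = s + y := by
  induction hx using AddSubmonoid.closure_induction with
  | mem s hs => exact .inr ⟨s, hs, 0, zero_mem _, (add_zero s).symm⟩
  | zero => exact .inl rfl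
  | add x₁ x₂ _ hx₂ ih₁ ih₂ =>
    rcases ih₁ with rfl | ⟨s, hs, y, hy, rfl⟩
    · simpa using ih₂
    · exact .inr ⟨s, hs, y + x₂, add_mem hy hx₂, add_assoc s y x₂⟩

end AddMonoid

lemma indecomposables_nComb_subset {M : Type*} [AddCommMonoid M] {S : Set M}
    (h0 : (0 : M) ∉ S) : indecomposables (NComb S) ⊆ S := by
  rintro x ⟨hx, hx0, hirr⟩
  obtain rfl | ⟨s, hs, y, hy, rfl⟩ := eq_zero_or_exists_add_of_mem_closure hx
  · exact absurd rfl hx0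
  · rcases hirr s (AddSubmonoid.subset_closure hs) y hy rfl with rfl | rfl
    · exact absurd hs h0
    · simpa using hs

section Functional

variable {V F : Type*} [AddCommGroup V] [FunLike F V ℝ] [AddMonoidHomClass F V ℝ] {B : Set V}
  {f : F}

lemma eq_zero_or_one_le_of_mem_nComb (hf : ∀ b ∈ B, f b = 1) {y : V} (hy : y ∈ NComb B) :
    y = 0 ∨ 1 ≤ f y := by
  induction hy using AddSubmonoid.closure_induction with
  | mem b hb => exact .inr (hf b hb).ge
  | zero => exact .inl rfl
  | add y z _ _ ihy ihz =>
    rcases ihy with rfl | hy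
    · simpa using ihz
    · right
      rcases ihz with rfl | hz
      · simpa using hy
      · rw [map_add]; linarith

lemma subset_indecomposables_nComb (hf : ∀ b ∈ B, f b = 1) : B ⊆ indecomposables (NComb B) := by
  intro b hb
  refine ⟨AddSubmonoid.subset_closure hb, fun h => by simpa [h] using hf b hb, ?_⟩
  intro y hy z hz hbyz
  have hsum : f y + f z = 1 := by rw [← map_add, ← hbyz, hf b hb]
  rcases eq_zero_or_one_le_of_mem_nComb hf hy with h | h
  · exact .inl h
  rcases eq_zero_or_one_le_of_mem_nComb hf hz with h' | h'
  · exact .inr h'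
  linarith

lemma indecomposables_nComb_eq (hf : ∀ b ∈ B, f b = 1) : indecomposables (NComb B) = B :=
  (indecomposables_nComb_subset fun h0 => by simpa using hf 0 h0).antisymm
    (subset_indecomposables_nComb hf)

lemma notMem_neg_nComb (hf : ∀ b ∈ B, f b = 1) {x : V} (hx : 0 < f x) : x ∉ -NComb B := by
  intro hneg
  rcases eq_zero_or_one_le_of_mem_nComb hf (Set.mem_neg.mp hneg) with h | h
  · simp [neg_eq_zero.mp h] at hx
  · rw [map_neg] at h; linarith

end Functional

theorem statement4_general {V : Type*} [AddCommGroup V] [Module ℝ V]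
    (Δ B B' : Set V)
    (hB : IsBase Δ B) (hB' : IsBase Δ B')
    (hne : B ≠ B') : ∃ α ∈ B, α ∈ -NComb B' := by
  by_contra! hBpos
  obtain ⟨hBΔ, hBli, hΔB⟩ := hB
  obtain ⟨hB'Δ, hB'li, hΔB'⟩ := hB'
  obtain ⟨f, hf⟩ :=
    Module.exists_dual_forall_apply_eq_one (linearIndependent_subtype_iff.mp hBli)
  obtain ⟨f', hf'⟩ :=
    Module.exists_dual_forall_apply_eq_one (linearIndependent_subtype_iff.mp hB'li)
  have hBB' : NComb B ⊆ NComb B' := AddSubmonoid.closure_le.mpr fun α hα =>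
    (hΔB' (hBΔ hα)).resolve_right (hBpos α hα)
  have hB'B : NComb B' ⊆ NComb B := AddSubmonoid.closure_le.mpr fun β hβ =>
    (hΔB (hB'Δ hβ)).resolve_right fun hneg =>
      notMem_neg_nComb hf' (hf' β hβ ▸ one_pos) (Set.neg_subset_neg.mpr hBB' hneg)
  apply hne
  rw [← indecomposables_nComb_eq hf, ← indecomposables_nComb_eq hf', hBB'.antisymm hB'B]

/-- If `B ≠ B'` are bases of `Δ`, some element of `B` is a negative root for `B'`. -/
theorem statement4 {V : Type*} [AddCommGroup V] [Module ℝ V]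
    (Δ B B' : Set V) (hfin : Δ.Finite) (h0 : (0 : V) ∉ Δ)
    (hB : IsBase Δ B) (hB' : IsBase Δ B')
    (hne : B ≠ B') : ∃ α ∈ B, α ∈ -NComb B' :=
  statement4_general Δ B B' hB hB' hne
end

section
/- Assume Δ = −Δ. Let Σ be a base of Δ and let α ∈ Σ be such that the only real scalar multiples of α lying in Δ are α and −α. Then there exists a linear functional φ : V → ℝ with φ(β) ≠ 0 for all β ∈ Δ and {β ∈ Δ : φ(β) > 0} = ((Δ ∩ ℕΣ) \ {α}) ∪ {−α}. In particular, ((Δ ∩ ℕΣ) \ {α}) ∪ {−α} is a positive system of Δ. -/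
open Pointwise

/-! Let `ht` be the linear form that is `1` on `Σ \ {α}` and `0` at `α`, let `c` be the
`α`-coordinate, and take `φ = N • ht - c` for a natural number `N` exceeding `c` on the finite set
`Δ`. A root `β ∈ ℕΣ` other than `α` has `ht β ≥ 1`: the only elements of `ℕΣ` of height `0` are
the multiples `n • α`, and the only multiples of `α` in `Δ` are `±α`. Hence `φ > 0` on
`(Δ ∩ ℕΣ) \ {α}`, while `φ α = -1`; since `Δ = -Δ` and every root lies in `ℕΣ ∪ -ℕΣ`, this
determines the sign of `φ` on all of `Δ`. -/

theorem LinearIndepOn.exists_linearMap_eqOn {K V W : Type*} [Field K] [AddCommGroup V]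
    [Module K V] [AddCommGroup W] [Module K W] {s : Set V} (hs : LinearIndepOn K id s)
    (g : V → W) : ∃ f : V →ₗ[K] W, ∀ b ∈ s, f b = g b := by
  refine ⟨(Module.Basis.extend hs).constr K fun i => g i, fun b hb => ?_⟩
  have hb' : b ∈ hs.extend s.subset_univ := hs.subset_extend _ hb
  simpa using (Module.Basis.extend hs).constr_basis K (fun i => g i) ⟨b, hb'⟩

theorem exists_eq_nsmul_or_one_le_of_mem_nComb {V F : Type*} [AddCommMonoid V] [FunLike F V ℝ]
    [AddMonoidHomClass F V ℝ] {S : Set V} {α : V} (f : F) (hα : f α = 0)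
    (hS : ∀ b ∈ S, b ≠ α → 1 ≤ f b) {x : V} (hx : x ∈ NComb S) :
    (∃ n : ℕ, x = n • α) ∨ 1 ≤ f x := by
  induction hx using AddSubmonoid.closure_induction with
  | mem b hb =>
    by_cases hbα : b = α
    · exact .inl ⟨1, by rw [hbα, one_smul]⟩
    · exact .inr (hS b hb hbα)
  | zero => exact .inl ⟨0, (zero_smul ℕ α).symm⟩
  | add x y _ _ ihx ihy =>
    rcases ihx with ⟨n, rfl⟩ | hx <;> rcases ihy with ⟨m, rfl⟩ | hy
    · exact .inl ⟨n + m, (add_smul n m α).symm⟩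
    · exact .inr (by simpa [map_nsmul, hα] using hy)
    · exact .inr (by simpa [map_nsmul, hα] using hx)
    · exact .inr (by rw [map_add]; linarith)

section RootSystem

variable {V : Type*} [AddCommGroup V] [Module ℝ V] {Δ B : Set V} {α : V}

theorem one_le_of_mem_nComb_of_ne (h0 : (0 : V) ∉ Δ) (hαΔ : α ∈ Δ)
    (hmult : ∀ c : ℝ, c • α ∈ Δ → c • α = α ∨ c • α = -α) (ht : V →ₗ[ℝ] ℝ) (htα : ht α = 0)
    (htB : ∀ b ∈ B, b ≠ α → 1 ≤ ht b) {β : V} (hβΔ : β ∈ Δ)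
    (hβB : β ∈ NComb B) (hβα : β ≠ α) : 1 ≤ ht β := by
  have hα0 : α ≠ 0 := by rintro rfl; exact h0 hαΔ
  refine (exists_eq_nsmul_or_one_le_of_mem_nComb ht htα htB hβB).resolve_left ?_
  rintro ⟨n, rfl⟩
  rw [← Nat.cast_smul_eq_nsmul ℝ] at hβΔ hβα
  rcases hmult n hβΔ with h | h
  · exact hβα h
  · have : ((n : ℝ) + 1) • α = 0 := by rw [add_smul, one_smul, h, neg_add_cancel]
    exact hα0 ((smul_eq_zero.mp this).resolve_left (by positivity))

theorem setOf_pos_eq_of_pos_on_nComb (hsym : Δ = -Δ) (hspan : Δ ⊆ NComb B ∪ -NComb B)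
    (hαΔ : α ∈ Δ) (φ : V →ₗ[ℝ] ℝ) (hφα : φ α < 0)
    (hφpos : ∀ β ∈ Δ, β ∈ NComb B → β ≠ α → 0 < φ β) :
    (∀ β ∈ Δ, φ β ≠ 0) ∧ {β ∈ Δ | 0 < φ β} = ((Δ ∩ NComb B) \ {α}) ∪ {-α} := by
  have hnegΔ : ∀ β ∈ Δ, -β ∈ Δ := fun β hβ => hsym ▸ Set.neg_mem_neg.mpr hβ
  have hφnegα : 0 < φ (-α) := by rw [map_neg]; linarith
  have hneg : ∀ β ∈ Δ, -β ∈ NComb B → β = -α ∨ φ β < 0 := by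
    intro β hβΔ hβB
    by_cases hβα : -β = α
    · exact .inl (neg_eq_iff_eq_neg.mp hβα)
    · have := hφpos (-β) (hnegΔ β hβΔ) hβB hβα
      exact .inr (by rw [map_neg] at this; linarith)
  refine ⟨fun β hβΔ => ?_, Set.ext fun β => ⟨fun ⟨hβΔ, hβpos⟩ => ?_, ?_⟩⟩
  · rcases hspan hβΔ with hβB | hβB
    · by_cases hβα : β = α
      · exact hβα ▸ hφα.ne
      · exact (hφpos β hβΔ hβB hβα).ne'
    · rcases hneg β hβΔ hβB with rfl | h
      · exact hφnegα.ne'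
      · exact h.ne
  · rcases hspan hβΔ with hβB | hβB
    · exact .inl ⟨⟨hβΔ, hβB⟩, by rintro rfl; linarith⟩
    · rcases hneg β hβΔ hβB with rfl | h
      · exact .inr rfl
      · linarith
  · rintro (⟨⟨hβΔ, hβB⟩, hβα⟩ | rfl)
    · exact ⟨hβΔ, hφpos β hβΔ hβB hβα⟩
    · exact ⟨hnegΔ α hαΔ, hφnegα⟩

end RootSystem

/-- Reflecting a base in a simple root `α` whose only multiples in `Δ` are `±α`
produces a positive system. -/
theorem statement5 {V : Type*} [AddCommGroup V] [Module ℝ V]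
    (Δ B : Set V) (hfin : Δ.Finite) (h0 : (0 : V) ∉ Δ)
    (hsym : Δ = -Δ) (hB : IsBase Δ B) (α : V) (hα : α ∈ B)
    (hmult : ∀ c : ℝ, c • α ∈ Δ → c • α = α ∨ c • α = -α) :
    ∃ φ : V →ₗ[ℝ] ℝ, (∀ β ∈ Δ, φ β ≠ 0) ∧
      {β ∈ Δ | 0 < φ β} = ((Δ ∩ NComb B) \ {α}) ∪ {-α} := by
  classical
  obtain ⟨hBΔ, hli, hspan⟩ := hB
  obtain ⟨ht, hht⟩ := LinearIndepOn.exists_linearMap_eqOn hli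
    fun b => if b = α then (0 : ℝ) else 1
  obtain ⟨c, hc⟩ := LinearIndepOn.exists_linearMap_eqOn hli
    fun b => if b = α then (1 : ℝ) else 0
  obtain ⟨N, hN⟩ : ∃ N : ℕ, ∀ β ∈ Δ, c β < N := by
    obtain ⟨M, hM⟩ := (hfin.image c).bddAbove
    obtain ⟨N, hN⟩ := exists_nat_gt M
    exact ⟨N, fun β hβ => (hM (Set.mem_image_of_mem c hβ)).trans_lt hN⟩
  have htα : ht α = 0 := by simp [hht α hα]
  refine ⟨(N : ℝ) • ht - c, setOf_pos_eq_of_pos_on_nComb hsym hspan (hBΔ hα) _ ?_ ?_⟩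
  · simp [htα, hc α hα]
  · intro β hβΔ hβB hβα
    have hβht : 1 ≤ ht β := one_le_of_mem_nComb_of_ne h0 (hBΔ hα) hmult ht htα
      (fun b hb hbα => by simp [hht b hb, hbα]) hβΔ hβB hβα
    have hcβ := hN β hβΔ
    simp only [LinearMap.sub_apply, LinearMap.smul_apply, smul_eq_mul, sub_pos]
    nlinarith
end

section
/- Assume Δ = −Δ. Let Σ and Σ' be bases of Δ and let α ∈ Σ satisfy α ∈ −ℕΣ'. Then the finite set (((Δ ∩ ℕΣ) \ {α}) ∪ {−α}) ∩ (−ℕΣ') has cardinality exactly one less than the cardinality of (Δ ∩ ℕΣ) ∩ (−ℕΣ'). -/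
open Pointwise

/-! Since `-α` is `B'`-positive, it is not `B'`-negative: so replacing `α` by `-α` leaves
the `B'`-negative part of `Δ ∩ ℕB` minus exactly `α`. That `ℕB'` and `-ℕB'` meet only in `0`
is seen on the coordinates of a basis extending `B'`, which are non-negative on `ℕB'`. -/

section

variable {V : Type*} [AddCommGroup V] [Module ℝ V]

lemma Module.Basis.coord_nonneg_of_mem_closure_range {ι : Type*} (b : Basis ι ℝ V) {x : V}
    (hx : x ∈ AddSubmonoid.closure (Set.range b)) (i : ι) : 0 ≤ b.coord i x := by
  classical
  induction hx using AddSubmonoid.closure_induction with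
  | mem y hy =>
    obtain ⟨j, rfl⟩ := hy
    rw [Module.Basis.coord_apply, Module.Basis.repr_self, Finsupp.single_apply]
    split_ifs <;> norm_num
  | zero => simp
  | add y z _ _ hy hz => rw [map_add]; exact add_nonneg hy hz

lemma eq_zero_of_mem_NComb_of_neg_mem {S : Set V}
    (hS : LinearIndependent ℝ (fun x : S => (x : V))) {x : V}
    (hx : x ∈ NComb S) (hx' : -x ∈ NComb S) : x = 0 := by
  set b := Module.Basis.extend (linearIndependent_subtype_iff.mp hS)
  have hSb : NComb S ⊆ AddSubmonoid.closure (Set.range b) := AddSubmonoid.closure_mono <| by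
    rw [Module.Basis.range_extend]
    exact Module.Basis.subset_extend _
  refine b.ext_elem fun i => ?_
  have hpos := b.coord_nonneg_of_mem_closure_range (hSb hx) i
  have hneg := b.coord_nonneg_of_mem_closure_range (hSb hx') i
  rw [map_neg, Module.Basis.coord_apply] at hneg
  rw [map_zero, Finsupp.zero_apply]
  exact le_antisymm (by simpa using hneg) hpos

end

lemma union_neg_inter_eq_inter_diff {G : Type*} [Neg G] {A T : Set G} {α : G} (hα : -α ∉ T) :
    ((A \ {α}) ∪ {-α}) ∩ T = (A ∩ T) \ {α} := by
  ext x
  simp only [Set.mem_inter_iff, Set.mem_union, Set.mem_sdiff, Set.mem_singleton_iff]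
  constructor
  · rintro ⟨⟨hxA, hxα⟩ | rfl, hxT⟩
    · exact ⟨⟨hxA, hxT⟩, hxα⟩
    · exact absurd hxT hα
  · rintro ⟨⟨hxA, hxT⟩, hxα⟩
    exact ⟨Or.inl ⟨hxA, hxα⟩, hxT⟩

theorem statement6_general {V : Type*} [AddCommGroup V] [Module ℝ V]
    (Δ B B' : Set V) (hfin : Δ.Finite)
    (hB : IsBase Δ B) (hB' : IsBase Δ B')
    (α : V) (hα : α ∈ B) (hneg : α ∈ -NComb B') :
    ((((Δ ∩ NComb B) \ {α}) ∪ {-α}) ∩ (-NComb B')).ncard + 1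
      = ((Δ ∩ NComb B) ∩ (-NComb B')).ncard := by
  have hα0 : α ≠ 0 := hB.2.1.ne_zero ⟨α, hα⟩
  have hnegα : -α ∉ -NComb B' := fun h =>
    hα0 (eq_zero_of_mem_NComb_of_neg_mem hB'.2.1 (by simpa using h) (Set.mem_neg.mp hneg))
  rw [union_neg_inter_eq_inter_diff hnegα]
  exact Set.ncard_sdiff_singleton_add_one
    ⟨⟨hB.1 hα, AddSubmonoid.subset_closure hα⟩, hneg⟩
    (hfin.subset (Set.inter_subset_left.trans Set.inter_subset_left))

/-- Reflecting `B` in a simple root `α` which is negative for `B'` decreases by exactly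
one the number of `B`-positive roots which are `B'`-negative. -/
theorem statement6 {V : Type*} [AddCommGroup V] [Module ℝ V]
    (Δ B B' : Set V) (hfin : Δ.Finite) (h0 : (0 : V) ∉ Δ)
    (hsym : Δ = -Δ) (hB : IsBase Δ B) (hB' : IsBase Δ B')
    (α : V) (hα : α ∈ B) (hneg : α ∈ -NComb B') :
    ((((Δ ∩ NComb B) \ {α}) ∪ {-α}) ∩ (-NComb B')).ncard + 1
      = ((Δ ∩ NComb B) ∩ (-NComb B')).ncard :=
  statement6_general Δ B B' hfin hB hB' α hα hneg
end

section
/- Let Σ be a base of Δ, let Δ₀ ⊆ Δ, and let α ∈ Σ satisfy α ∉ Δ₀ and −α ∉ Δ₀. Suppose Σ' is a base of Δ with Δ ∩ ℕΣ' = ((Δ ∩ ℕΣ) \ {α}) ∪ {−α}, and suppose Π and Π' are bases of Δ₀ satisfying Δ₀ ∩ ℕΠ = Δ₀ ∩ ℕΣ and Δ₀ ∩ ℕΠ' = Δ₀ ∩ ℕΣ'. Then Π = Π'. (Reflecting a base in a root not lying in Δ₀ does not change the base of Δ₀ it determines; in particular, singular reflections preserve the principal roots.) -/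
open Pointwise

/-!
Since `±α ∉ Δ₀`, the positive systems `Δ ∩ ℕΣ` and `Δ ∩ ℕΣ'` meet `Δ₀` in the same set. A base of
`Δ₀` generates the same monoid as the positive roots of `Δ₀` it determines, and a linearly
independent set is recovered from the monoid it generates as its nonzero indecomposable elements.
-/

lemma Finsupp.eq_zero_or_eq_zero_of_single_one_eq_add {ι : Type*} {i : ι} {c d : ι →₀ ℕ}
    (h : single i 1 = c + d) : c = 0 ∨ d = 0 := by
  have hdeg : c.degree + d.degree = 1 := by rw [← map_add, ← h, degree_single]
  rw [← degree_eq_zero_iff c, ← degree_eq_zero_iff d]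
  omega

lemma LinearIndependent.eq_setOf_isAddIndecomposable {V : Type*} [AddCommMonoid V] {S : Set V}
    (hS : LinearIndependent ℕ ((↑) : S → V)) :
    S = {x | x ≠ 0 ∧ IsAddIndecomposable id (AddSubmonoid.closure S : Set V) x} := by
  set f := Finsupp.linearCombination ℕ ((↑) : S → V)
  have hrange : (AddSubmonoid.closure S : Set V) = Set.range f := by
    rw [← LinearMap.coe_range, Finsupp.range_linearCombination, Subtype.range_coe,
      ← Submodule.span_nat_eq_addSubmonoidClosure]
    rfl
  have hsingle (i : S) : f (Finsupp.single i 1) = i := by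
    simp [f, Finsupp.linearCombination_single]
  simp only [IsAddIndecomposable, id, hrange]
  ext x
  constructor
  · intro hx
    refine ⟨hS.ne_zero ⟨x, hx⟩, ⟨_, hsingle ⟨x, hx⟩⟩, ?_⟩
    rintro _ ⟨c, rfl⟩ _ ⟨d, rfl⟩ hcd
    replace hcd := (hsingle ⟨x, hx⟩).trans hcd
    rw [← map_add] at hcd
    rcases Finsupp.eq_zero_or_eq_zero_of_single_one_eq_add (hS hcd) with rfl | rfl
    · exact .inl (map_zero f)
    · exact .inr (map_zero f)
  · rintro ⟨hx0, ⟨c, rfl⟩, hind⟩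
    obtain ⟨i, hi⟩ : ∃ i, c i ≠ 0 := by
      by_contra! hc
      exact hx0 (by rw [show c = 0 from Finsupp.ext hc, map_zero])
    have hc : c = Finsupp.single i 1 + (c - Finsupp.single i 1) :=
      (add_tsub_cancel_of_le (Finsupp.single_le_iff.mpr (Nat.one_le_iff_ne_zero.mpr hi))).symm
    rcases hind _ ⟨_, rfl⟩ _ ⟨_, rfl⟩ (by rw [← map_add, ← hc]) with hi0 | hrest
    · exact absurd (hsingle i ▸ hi0) (hS.ne_zero i)
    · have hrest0 : c - Finsupp.single i 1 = 0 := hS (hrest.trans (map_zero f).symm)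
      rw [hc, hrest0, add_zero, hsingle]
      exact i.2

lemma LinearIndependent.eq_of_addSubmonoidClosure_eq {V : Type*} [AddCommMonoid V] {S T : Set V}
    (hS : LinearIndependent ℕ ((↑) : S → V)) (hT : LinearIndependent ℕ ((↑) : T → V))
    (h : AddSubmonoid.closure S = AddSubmonoid.closure T) : S = T := by
  rw [hS.eq_setOf_isAddIndecomposable, hT.eq_setOf_isAddIndecomposable, h]

lemma AddSubmonoid.closure_inter_closure_of_subset {M : Type*} [AddMonoid M] {s t : Set M}
    (hst : s ⊆ t) : closure (t ∩ closure s) = closure s :=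
  le_antisymm (closure_le.mpr Set.inter_subset_right)
    (closure_mono fun _ hx => ⟨hst hx, subset_closure hx⟩)

lemma Set.inter_eq_inter_of_inter_eq_diff_union {α : Type*} {s t u u' : Set α} {a b : α}
    (hst : s ⊆ t) (ha : a ∉ s) (hb : b ∉ s) (h : t ∩ u' = (t ∩ u) \ {a} ∪ {b}) :
    s ∩ u' = s ∩ u := by
  rw [← inter_eq_left.mpr hst, inter_assoc, h, inter_assoc]
  ext x
  by_cases hxs : x ∈ s
  · have hxa : x ≠ a := fun hxa => ha (hxa ▸ hxs)
    have hxb : x ≠ b := fun hxb => hb (hxb ▸ hxs)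
    simp [hxs, hxa, hxb]
  · simp [hxs]

theorem statement8_general {V : Type*} [AddCommGroup V] [Module ℝ V]
    (Δ Δ₀ B B' P P' : Set V) (hsub : Δ₀ ⊆ Δ)
    (α : V) (hα₀ : α ∉ Δ₀) (hα₀' : -α ∉ Δ₀)
    (hpos : Δ ∩ NComb B' = ((Δ ∩ NComb B) \ {α}) ∪ {-α})
    (hP : IsBase Δ₀ P) (hP' : IsBase Δ₀ P')
    (hPpos : Δ₀ ∩ NComb P = Δ₀ ∩ NComb B)
    (hP'pos : Δ₀ ∩ NComb P' = Δ₀ ∩ NComb B') :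
    P = P' := by
  have hpos₀ : Δ₀ ∩ NComb B' = Δ₀ ∩ NComb B :=
    Set.inter_eq_inter_of_inter_eq_diff_union hsub hα₀ hα₀' hpos
  refine (hP.2.1.restrict_scalars' ℕ).eq_of_addSubmonoidClosure_eq
    (hP'.2.1.restrict_scalars' ℕ) ?_
  rw [← AddSubmonoid.closure_inter_closure_of_subset hP.1,
    ← AddSubmonoid.closure_inter_closure_of_subset hP'.1]
  exact congrArg AddSubmonoid.closure (hPpos.trans (hpos₀.symm.trans hP'pos.symm))

/-- Reflecting a base in a simple root `α` with `±α ∉ Δ₀` does not change the base of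
`Δ₀` determined by the induced positive system. -/
theorem statement8 {V : Type*} [AddCommGroup V] [Module ℝ V]
    (Δ Δ₀ B B' P P' : Set V) (hfin : Δ.Finite) (h0 : (0 : V) ∉ Δ) (hsub : Δ₀ ⊆ Δ)
    (hB : IsBase Δ B) (α : V) (hα : α ∈ B) (hα₀ : α ∉ Δ₀) (hα₀' : -α ∉ Δ₀)
    (hB' : IsBase Δ B')
    (hpos : Δ ∩ NComb B' = ((Δ ∩ NComb B) \ {α}) ∪ {-α})
    (hP : IsBase Δ₀ P) (hP' : IsBase Δ₀ P')
    (hPpos : Δ₀ ∩ NComb P = Δ₀ ∩ NComb B)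
    (hP'pos : Δ₀ ∩ NComb P' = Δ₀ ∩ NComb B') :
    P = P' :=
  statement8_general Δ Δ₀ B B' P P' hsub α hα₀ hα₀' hpos hP hP' hPpos hP'pos
end

section
/- Let r, s ≥ 1, let Σ := {γ_1−γ_2, …, γ_{r−1}−γ_r, γ_r−ν_1, ν_1−ν_2, …, ν_{s−1}−ν_s, ν_s}, and let Π := {γ_1−γ_2, …, γ_{r−1}−γ_r, γ_r, ν_1−ν_2, …, ν_{s−1}−ν_s, ν_s}. Then Π is a base of the even part Δ_reg of BC(r,s), the induced positive systems agree, i.e. Δ_reg ∩ ℕΠ = Δ_reg ∩ ℕΣ, and Π \ Σ = {γ_r}; that is, Π is the set of principal roots determined by Σ, and γ_r is the unique principal root not lying in Σ. -/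
open Pointwise

/-- The `i`-th standard basis vector of `ℝⁿ` (indices are 0-based; junk value `0` out of range). -/
def bv (n i : ℕ) : Fin n → ℝ :=
  if h : i < n then Pi.single (⟨i, h⟩ : Fin n) 1 else 0

/-- The set `{1, -1}` of signs. -/
def pm : Set ℝ := {1, -1}

/-- The restricted root system `BC(r,s)` in `ℝ^(r+s)`, with `γ_i = bv (r+s) i` for
`0 ≤ i < r` (0-indexed) and `ν_j = bv (r+s) (r+j)` for `0 ≤ j < s`. -/
def BCset (r s : ℕ) : Set (Fin (r + s) → ℝ) :=
  {x | ∃ a ∈ pm, ∃ b ∈ pm, ∃ i j : ℕ, i < j ∧ j < r ∧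
      x = a • bv (r + s) i + b • bv (r + s) j} ∪
  {x | ∃ a ∈ pm, ∃ i : ℕ, i < r ∧
      (x = a • bv (r + s) i ∨ x = (2 * a) • bv (r + s) i)} ∪
  {x | ∃ a ∈ pm, ∃ b ∈ pm, ∃ i j : ℕ, i < j ∧ j < s ∧
      x = a • bv (r + s) (r + i) + b • bv (r + s) (r + j)} ∪
  {x | ∃ a ∈ pm, ∃ j : ℕ, j < s ∧
      (x = a • bv (r + s) (r + j) ∨ x = (2 * a) • bv (r + s) (r + j))} ∪
  {x | ∃ a ∈ pm, ∃ b ∈ pm, ∃ i j : ℕ, i < r ∧ j < s ∧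
      x = a • bv (r + s) i + b • bv (r + s) (r + j)}

/-- The standard base `Σ = {γ_1−γ_2, …, γ_{r−1}−γ_r, γ_r−ν_1, ν_1−ν_2, …, ν_{s−1}−ν_s, ν_s}`
of `BC(r,s)` (written with 0-based indices). -/
def BCbase (r s : ℕ) : Set (Fin (r + s) → ℝ) :=
  {x | ∃ i : ℕ, i + 1 < r ∧ x = bv (r + s) i - bv (r + s) (i + 1)} ∪
  {bv (r + s) (r - 1) - bv (r + s) r} ∪
  {x | ∃ j : ℕ, j + 1 < s ∧ x = bv (r + s) (r + j) - bv (r + s) (r + j + 1)} ∪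
  {bv (r + s) (r + s - 1)}
/-- The even (regular) part of `BC(r,s)`: the roots `±γ_i±γ_j`, `±γ_i`, `±2γ_i`,
`±ν_i±ν_j`, `±ν_j`, `±2ν_j`. -/
def BCreg (r s : ℕ) : Set (Fin (r + s) → ℝ) :=
  {x | ∃ a ∈ pm, ∃ b ∈ pm, ∃ i j : ℕ, i < j ∧ j < r ∧
      x = a • bv (r + s) i + b • bv (r + s) j} ∪
  {x | ∃ a ∈ pm, ∃ i : ℕ, i < r ∧
      (x = a • bv (r + s) i ∨ x = (2 * a) • bv (r + s) i)} ∪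
  {x | ∃ a ∈ pm, ∃ b ∈ pm, ∃ i j : ℕ, i < j ∧ j < s ∧
      x = a • bv (r + s) (r + i) + b • bv (r + s) (r + j)} ∪
  {x | ∃ a ∈ pm, ∃ j : ℕ, j < s ∧
      (x = a • bv (r + s) (r + j) ∨ x = (2 * a) • bv (r + s) (r + j))}

/-- The set `Π = {γ_1−γ_2, …, γ_{r−1}−γ_r, γ_r, ν_1−ν_2, …, ν_{s−1}−ν_s, ν_s}` of principal
roots (0-based indices). -/
def BCprin (r s : ℕ) : Set (Fin (r + s) → ℝ) :=
  {x | ∃ i : ℕ, i + 1 < r ∧ x = bv (r + s) i - bv (r + s) (i + 1)} ∪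
  {bv (r + s) (r - 1)} ∪
  {x | ∃ j : ℕ, j + 1 < s ∧ x = bv (r + s) (r + j) - bv (r + s) (r + j + 1)} ∪
  {bv (r + s) (r + s - 1)}

/-!
Let `n = r + s`. The height functional `x ↦ ∑ₖ (n - k) xₖ` takes the value `1` on every element
of `Σ` (it is the height with respect to `Σ`, since `e_i` is the sum of the last `n - i`
elements of `Σ`), so it is non-negative on `ℕΣ`, while `γ_r` has height `s + 1 ≥ 2` and hence
lies outside `Σ`. By telescoping, every `e_i` and every difference `e_i - e_j` (`i < j` in the
same block) lies in `ℕΠ` and has positive height; hence every even root is `±y` with `y ∈ ℕΠ`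
of positive height. As `Π ⊆ ℕΣ`, an even root in `ℕΣ` cannot be `-y`, so it lies in `ℕΠ`.
Linear independence of `Π` follows because its `n` elements span `ℝⁿ`.
-/

section Submonoids

variable {V : Type*} [AddCommGroup V]

lemma sub_mem_of_forall_sub_succ_mem {M : AddSubmonoid V} (v : ℕ → V) {i j : ℕ} (hij : i < j)
    (h : ∀ k, i ≤ k → k < j → v k - v (k + 1) ∈ M) : v i - v j ∈ M := by
  induction j, hij using Nat.le_induction with
  | base => exact h i le_rfl i.lt_succ_self
  | succ j hij ih =>
    rw [← sub_add_sub_cancel (v i) (v j) (v (j + 1))]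
    exact add_mem (ih fun k hik hkj => h k hik (by omega)) (h j (by omega) j.lt_succ_self)

lemma mem_of_forall_sub_succ_mem {M : AddSubmonoid V} (v : ℕ → V) {i m : ℕ} (him : i ≤ m)
    (h : ∀ k, i ≤ k → k < m → v k - v (k + 1) ∈ M) (hm : v m ∈ M) : v i ∈ M := by
  rcases him.eq_or_lt with rfl | him
  · exact hm
  · rw [← sub_add_cancel (v i) (v m)]
    exact add_mem (sub_mem_of_forall_sub_succ_mem v him h) hm

lemma nonneg_of_mem_NComb (f : V →+ ℝ) {S : Set V} (hS : ∀ x ∈ S, 0 ≤ f x) {x : V}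
    (hx : x ∈ NComb S) : 0 ≤ f x := by
  induction hx using AddSubmonoid.closure_induction with
  | mem x hx => exact hS x hx
  | zero => simp
  | add x y _ _ hx hy => rw [map_add]; exact add_nonneg hx hy

lemma inter_NComb_eq_of_forall_eq_or_eq_neg (f : V →+ ℝ) {Δ S T : Set V}
    (hΔ : ∀ x ∈ Δ, ∃ y, (y ∈ NComb T ∧ 0 < f y) ∧ (x = y ∨ x = -y))
    (hTS : T ⊆ NComb S) (hS : ∀ x ∈ S, 0 ≤ f x) :
    Δ ∩ NComb S = Δ ∩ NComb T := by
  refine subset_antisymm (fun x ⟨hxΔ, hxS⟩ => ⟨hxΔ, ?_⟩)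
    (Set.inter_subset_inter_right _ (AddSubmonoid.closure_le.mpr hTS))
  obtain ⟨y, ⟨hyT, hy⟩, rfl | rfl⟩ := hΔ x hxΔ
  · exact hyT
  · have := nonneg_of_mem_NComb f hS hxS
    rw [map_neg] at this
    linarith

lemma linearIndepOn_id_of_subset_range {R : Type*} [Semiring R] [OrzechProperty R] [Module R V]
    {ι : Type*} [Fintype ι] {u : ι → V} {S : Set V} (hS : S ⊆ Set.range u)
    (hspan : ⊤ ≤ Submodule.span R S) (hcard : Fintype.card ι = Module.finrank R V) :
    LinearIndepOn R id S :=
  (linearIndependent_of_top_le_span_of_card_eq_finrank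
    (hspan.trans (Submodule.span_mono hS)) hcard).linearIndepOn_id.mono hS

variable [Module ℝ V]

lemma exists_eq_or_eq_neg_pm_smul {P : V → Prop} {a : ℝ} (ha : a ∈ pm) {u : V} (hu : P u) :
    ∃ y, P y ∧ (a • u = y ∨ a • u = -y) := by
  rcases ha with rfl | rfl
  · exact ⟨u, hu, Or.inl (one_smul ℝ u)⟩
  · exact ⟨u, hu, Or.inr (neg_one_smul ℝ u)⟩

lemma exists_eq_or_eq_neg_pm_smul_add_pm_smul {P : V → Prop} {a b : ℝ} (ha : a ∈ pm)
    (hb : b ∈ pm) {u v : V} (hadd : P (u + v)) (hsub : P (u - v)) :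
    ∃ y, P y ∧ (a • u + b • v = y ∨ a • u + b • v = -y) := by
  rcases ha with rfl | rfl <;> rcases hb with rfl | rfl
  · exact ⟨u + v, hadd, Or.inl (by module)⟩
  · exact ⟨u - v, hsub, Or.inl (by module)⟩
  · exact ⟨u - v, hsub, Or.inr (by module)⟩
  · exact ⟨u + v, hadd, Or.inr (by module)⟩

end Submonoids

section Height

noncomputable def height (n : ℕ) : (Fin n → ℝ) →+ ℝ :=
  AddMonoidHom.mk' (fun x => (fun k : Fin n => (n - k : ℝ)) ⬝ᵥ x) (dotProduct_add _)

variable {n i : ℕ}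

lemma height_bv (hi : i < n) : height n (bv n i) = n - i := by
  simp [height, bv, hi, dotProduct_single]

lemma height_bv_sub_bv_succ (hi : i + 1 < n) : height n (bv n i - bv n (i + 1)) = 1 := by
  rw [map_sub, height_bv (by omega), height_bv hi]
  push_cast
  ring

end Height

section BCroots

variable {r s : ℕ}

lemma bv_sub_bv_succ_mem_BCprin {k : ℕ} (hk : k + 1 < r ∨ r ≤ k ∧ k + 1 < r + s) :
    bv (r + s) k - bv (r + s) (k + 1) ∈ BCprin r s := by
  rcases hk with hk | ⟨hrk, hk⟩
  · exact Or.inl (Or.inl (Or.inl ⟨k, hk, rfl⟩))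
  · refine Or.inl (Or.inr ⟨k - r, by omega, ?_⟩)
    rw [Nat.add_sub_cancel' hrk]

lemma bv_sub_bv_mem_NComb_BCprin {i j : ℕ} (hij : i < j) (hj : j < r ∨ r ≤ i ∧ j < r + s) :
    bv (r + s) i - bv (r + s) j ∈ NComb (BCprin r s) :=
  sub_mem_of_forall_sub_succ_mem (bv (r + s)) hij fun _ hik hkj =>
    AddSubmonoid.subset_closure (bv_sub_bv_succ_mem_BCprin (by omega))

lemma bv_mem_NComb_BCprin {i : ℕ} (hi : i < r + s) : bv (r + s) i ∈ NComb (BCprin r s) := by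
  obtain ⟨m, hm, him, hblock⟩ : ∃ m, bv (r + s) m ∈ BCprin r s ∧ i ≤ m ∧
      (m < r ∨ r ≤ i ∧ m < r + s) := by
    by_cases hir : i < r
    · exact ⟨r - 1, Or.inl (Or.inl (Or.inr rfl)), by omega, by omega⟩
    · exact ⟨r + s - 1, Or.inr rfl, by omega, by omega⟩
  exact mem_of_forall_sub_succ_mem (bv (r + s)) him
    (fun _ hik hkm => bv_sub_bv_mem_NComb_BCprin (by omega) (by omega))
    (AddSubmonoid.subset_closure hm)

lemma bv_sub_bv_succ_mem_BCbase (hr : 1 ≤ r) {k : ℕ} (hk : k + 1 < r + s) :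
    bv (r + s) k - bv (r + s) (k + 1) ∈ BCbase r s := by
  rcases lt_trichotomy (k + 1) r with hkr | hkr | hkr
  · exact Or.inl (Or.inl (Or.inl ⟨k, hkr, rfl⟩))
  · refine Or.inl (Or.inl (Or.inr ?_))
    rw [Set.mem_singleton_iff, hkr, show k = r - 1 by omega]
  · refine Or.inl (Or.inr ⟨k - r, by omega, ?_⟩)
    rw [Nat.add_sub_cancel' (by omega : r ≤ k)]

lemma bv_mem_NComb_BCbase (hr : 1 ≤ r) {i : ℕ} (hi : i < r + s) :
    bv (r + s) i ∈ NComb (BCbase r s) :=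
  mem_of_forall_sub_succ_mem (bv (r + s)) (by omega : i ≤ r + s - 1)
    (fun _ _ hk => AddSubmonoid.subset_closure (bv_sub_bv_succ_mem_BCbase hr (by omega)))
    (AddSubmonoid.subset_closure (Or.inr rfl))

lemma BCprin_subset_NComb_BCbase (hr : 1 ≤ r) : BCprin r s ⊆ NComb (BCbase r s) := by
  rintro x (((⟨i, hi, rfl⟩ | rfl) | ⟨j, hj, rfl⟩) | rfl)
  · exact AddSubmonoid.subset_closure (bv_sub_bv_succ_mem_BCbase hr (by omega))
  · exact bv_mem_NComb_BCbase hr (by omega)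
  · exact AddSubmonoid.subset_closure (bv_sub_bv_succ_mem_BCbase hr (by omega))
  · exact bv_mem_NComb_BCbase hr (by omega)

lemma height_eq_one_of_mem_BCbase (hr : 1 ≤ r) (hs : 1 ≤ s) {x : Fin (r + s) → ℝ}
    (hx : x ∈ BCbase r s) : height (r + s) x = 1 := by
  rcases hx with ((⟨i, hi, rfl⟩ | rfl) | ⟨j, hj, rfl⟩) | rfl
  · exact height_bv_sub_bv_succ (by omega)
  · rw [map_sub, height_bv (by omega), height_bv (by omega), Nat.cast_sub hr]
    ring
  · exact height_bv_sub_bv_succ (by omega)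
  · rw [height_bv (by omega), Nat.cast_sub (by omega)]
    push_cast
    ring

lemma bv_pred_notMem_BCbase (hr : 1 ≤ r) (hs : 1 ≤ s) : bv (r + s) (r - 1) ∉ BCbase r s := by
  intro h
  have hheight := height_eq_one_of_mem_BCbase hr hs h
  rw [height_bv (by omega), Nat.cast_sub hr] at hheight
  have : (1 : ℝ) ≤ s := by exact_mod_cast hs
  push_cast at hheight
  linarith

lemma BCprin_diff_BCbase (hr : 1 ≤ r) (hs : 1 ≤ s) :
    BCprin r s \ BCbase r s = {bv (r + s) (r - 1)} := by
  refine subset_antisymm ?_ (Set.singleton_subset_iff.mpr ⟨Or.inl (Or.inl (Or.inr rfl)),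
    bv_pred_notMem_BCbase hr hs⟩)
  rintro x ⟨(((⟨i, hi, rfl⟩ | rfl) | ⟨j, hj, rfl⟩) | rfl), hx⟩
  · exact absurd (bv_sub_bv_succ_mem_BCbase hr (by omega)) hx
  · rfl
  · exact absurd (bv_sub_bv_succ_mem_BCbase hr (by omega)) hx
  · exact absurd (Or.inr rfl) hx

lemma BCprin_subset_BCreg (hr : 1 ≤ r) (hs : 1 ≤ s) : BCprin r s ⊆ BCreg r s := by
  have hone : (1 : ℝ) ∈ pm := Or.inl rfl
  have hnegone : (-1 : ℝ) ∈ pm := Or.inr rfl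
  rintro x (((⟨i, hi, rfl⟩ | rfl) | ⟨j, hj, rfl⟩) | rfl)
  · exact Or.inl (Or.inl (Or.inl
      ⟨1, hone, -1, hnegone, i, i + 1, i.lt_succ_self, hi, by module⟩))
  · exact Or.inl (Or.inl (Or.inr
      ⟨1, hone, r - 1, Nat.sub_one_lt_of_lt hr, Or.inl (one_smul ℝ _).symm⟩))
  · refine Or.inl (Or.inr ⟨1, hone, -1, hnegone, j, j + 1, j.lt_succ_self, hj, ?_⟩)
    rw [← add_assoc]
    module
  · refine Or.inr ⟨1, hone, s - 1, Nat.sub_one_lt_of_lt hs, Or.inl ?_⟩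
    rw [one_smul, ← Nat.add_sub_assoc (by omega)]

def IsPositive (r s : ℕ) (y : Fin (r + s) → ℝ) : Prop :=
  y ∈ NComb (BCprin r s) ∧ 0 < height (r + s) y

lemma IsPositive.add {y z : Fin (r + s) → ℝ} (hy : IsPositive r s y) (hz : IsPositive r s z) :
    IsPositive r s (y + z) :=
  ⟨add_mem hy.1 hz.1, (map_add (height (r + s)) y z).symm ▸ add_pos hy.2 hz.2⟩

lemma isPositive_bv {i : ℕ} (hi : i < r + s) : IsPositive r s (bv (r + s) i) := by
  refine ⟨bv_mem_NComb_BCprin hi, ?_⟩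
  rw [height_bv hi, sub_pos]
  exact_mod_cast hi

lemma isPositive_bv_sub_bv {i j : ℕ} (hij : i < j) (hj : j < r ∨ r ≤ i ∧ j < r + s) :
    IsPositive r s (bv (r + s) i - bv (r + s) j) := by
  refine ⟨bv_sub_bv_mem_NComb_BCprin hij hj, ?_⟩
  rw [map_sub, height_bv (by omega), height_bv (by omega), sub_sub_sub_cancel_left, sub_pos]
  exact_mod_cast hij

lemma exists_isPositive_of_mem_BCreg {x : Fin (r + s) → ℝ} (hx : x ∈ BCreg r s) :
    ∃ y, IsPositive r s y ∧ (x = y ∨ x = -y) := by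
  rcases hx with ((⟨a, ha, b, hb, i, j, hij, hj, rfl⟩ | ⟨a, ha, i, hi, rfl | rfl⟩) |
      ⟨a, ha, b, hb, i, j, hij, hj, rfl⟩) | ⟨a, ha, j, hj, rfl | rfl⟩
  · exact exists_eq_or_eq_neg_pm_smul_add_pm_smul ha hb
      ((isPositive_bv (by omega)).add (isPositive_bv (by omega)))
      (isPositive_bv_sub_bv hij (Or.inl hj))
  · exact exists_eq_or_eq_neg_pm_smul ha (isPositive_bv (by omega))
  · rw [mul_comm, mul_smul, two_smul]
    exact exists_eq_or_eq_neg_pm_smul ha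
      ((isPositive_bv (by omega)).add (isPositive_bv (by omega)))
  · exact exists_eq_or_eq_neg_pm_smul_add_pm_smul ha hb
      ((isPositive_bv (by omega)).add (isPositive_bv (by omega)))
      (isPositive_bv_sub_bv (by omega) (Or.inr ⟨by omega, by omega⟩))
  · exact exists_eq_or_eq_neg_pm_smul ha (isPositive_bv (by omega))
  · rw [mul_comm, mul_smul, two_smul]
    exact exists_eq_or_eq_neg_pm_smul ha
      ((isPositive_bv (by omega)).add (isPositive_bv (by omega)))

def prinFamily (r s : ℕ) (k : Fin (r + s)) : Fin (r + s) → ℝ :=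
  if (k : ℕ) + 1 = r ∨ (k : ℕ) + 1 = r + s then bv (r + s) k
  else bv (r + s) k - bv (r + s) (k + 1)

lemma BCprin_subset_range_prinFamily (hr : 1 ≤ r) :
    BCprin r s ⊆ Set.range (prinFamily r s) := by
  rintro x (((⟨i, hi, rfl⟩ | rfl) | ⟨j, hj, rfl⟩) | rfl)
  · exact ⟨⟨i, by omega⟩, if_neg (by dsimp only; omega)⟩
  · exact ⟨⟨r - 1, by omega⟩, if_pos (by dsimp only; omega)⟩
  · exact ⟨⟨r + j, by omega⟩, if_neg (by dsimp only; omega)⟩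
  · exact ⟨⟨r + s - 1, by omega⟩, if_pos (by dsimp only; omega)⟩

lemma linearIndependent_BCprin (hr : 1 ≤ r) :
    LinearIndependent ℝ (fun x : BCprin r s => (x : Fin (r + s) → ℝ)) := by
  refine linearIndepOn_id_of_subset_range (BCprin_subset_range_prinFamily hr) ?_ (by simp)
  rw [← (Pi.basisFun ℝ (Fin (r + s))).span_eq, Submodule.span_le]
  rintro _ ⟨k, rfl⟩
  have hk : Pi.basisFun ℝ (Fin (r + s)) k = bv (r + s) k := by simp [bv]
  rw [hk]
  exact Submodule.closure_subset_span (bv_mem_NComb_BCprin k.isLt)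

lemma BCreg_subset_NComb_BCprin_union_neg :
    BCreg r s ⊆ NComb (BCprin r s) ∪ -NComb (BCprin r s) := by
  intro x hx
  obtain ⟨y, ⟨hy, -⟩, rfl | rfl⟩ := exists_isPositive_of_mem_BCreg hx
  · exact Or.inl hy
  · exact Or.inr (Set.neg_mem_neg.mpr hy)

lemma isBase_BCprin (hr : 1 ≤ r) (hs : 1 ≤ s) : IsBase (BCreg r s) (BCprin r s) :=
  ⟨BCprin_subset_BCreg hr hs, linearIndependent_BCprin hr,
    BCreg_subset_NComb_BCprin_union_neg⟩

lemma BCreg_inter_NComb_BCbase (hr : 1 ≤ r) (hs : 1 ≤ s) :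
    BCreg r s ∩ NComb (BCbase r s) = BCreg r s ∩ NComb (BCprin r s) :=
  inter_NComb_eq_of_forall_eq_or_eq_neg (height (r + s))
    (fun _ => exists_isPositive_of_mem_BCreg) (BCprin_subset_NComb_BCbase hr)
    (fun _ hx => (height_eq_one_of_mem_BCbase hr hs hx).symm ▸ zero_le_one)

end BCroots

/-- `Π` is a base of the even part of `BC(r,s)`, it induces the same positive system on the
even part as `Σ` does, and `γ_r` is the unique principal root not lying in `Σ`. -/
theorem statement10 (r s : ℕ) (hr : 1 ≤ r) (hs : 1 ≤ s) :
    IsBase (BCreg r s) (BCprin r s) ∧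
    BCreg r s ∩ NComb (BCprin r s) = BCreg r s ∩ NComb (BCbase r s) ∧
    BCprin r s \ BCbase r s = {bv (r + s) (r - 1)} :=
  ⟨isBase_BCprin hr hs, (BCreg_inter_NComb_BCbase hr hs).symm, BCprin_diff_BCbase hr hs⟩
end
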